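/- For all q ≥ 0, P > 0, 0 < Λ ≤ Λ₀, and every natural number k, there exists C_k > 0 such that ∫_Λ^{Λ₀} (log₊(P/λ))^k / (λ+q) dλ < C_k (1 + (log₊(P/(Λ+q)))^{k+1} + log₊(Λ₀/(Λ+q))). -/

import Mathlib

noncomputable def logPlus (x : ℝ) : ℝ := Real.log (max 1 x)

/-!
Write `L = logPlus`. Since `P / l = P / (l + q) * (1 + q / l)`, we have
`L (P / l) ≤ L (P / (l + q)) + log (1 + q / l)`, and `(u + v) ^ k ≤ 2 ^ (k - 1) * (u ^ k + v ^ k)`.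
After the shift `x = l + q` the first term gives `∫ L (P / x) ^ k / x`, which has the antiderivative
`-L (P / x) ^ (k + 1) / (k + 1)` and is therefore at most `L (P / (Λ + q)) ^ (k + 1) / (k + 1)`.
For the second term, `log (1 + t) ^ k ≤ (2k) ^ k * √t`, and `√(q / l) / (l + q)` has the bounded
antiderivative `2 * arctan √(l / q)`, so this part is at most `(2k) ^ k * π` whatever `q` is.
For `k = 0` the integral is `log ((Λ₀ + q) / (Λ + q)) ≤ log 2 + L (Λ₀ / (Λ + q))`.
-/

open Real Set MeasureTheory

@[fun_prop]
lemma continuous_logPlus : Continuous logPlus :=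
  (continuous_const.max continuous_id).log fun x => (zero_lt_one.trans_le (le_max_left 1 x)).ne'

lemma logPlus_nonneg (x : ℝ) : 0 ≤ logPlus x :=
  log_nonneg (le_max_left 1 x)

lemma logPlus_of_one_le {x : ℝ} (h : 1 ≤ x) : logPlus x = log x := by
  rw [logPlus, max_eq_right h]

lemma logPlus_of_le_one {x : ℝ} (h : x ≤ 1) : logPlus x = 0 := by
  rw [logPlus, max_eq_left h, log_one]

lemma logPlus_div_of_le {P x : ℝ} (hx : 0 < x) (h : x ≤ P) : logPlus (P / x) = log P - log x := by
  rw [logPlus_of_one_le ((one_le_div hx).2 h), log_div (hx.trans_le h).ne' hx.ne']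

lemma logPlus_mul_le (x : ℝ) {y : ℝ} (hy : 0 ≤ y) : logPlus (x * y) ≤ logPlus x + logPlus y := by
  have hx1 : 1 ≤ max 1 x := le_max_left 1 x
  have hy1 : 1 ≤ max 1 y := le_max_left 1 y
  have hxy : max 1 (x * y) ≤ max 1 x * max 1 y := by
    refine max_le (by nlinarith) ?_
    rcases le_total x 0 with hx | hx
    · nlinarith
    · exact mul_le_mul (le_max_right 1 x) (le_max_right 1 y) hy (by positivity)
  rw [logPlus, logPlus, logPlus, ← log_mul (by positivity) (by positivity)]
  exact log_le_log (by positivity) hxy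

lemma logPlus_div_le_add {P l q : ℝ} (hl : 0 < l) (hq : 0 ≤ q) :
    logPlus (P / l) ≤ logPlus (P / (l + q)) + log (1 + q / l) := by
  have h1 : 1 ≤ 1 + q / l := le_add_of_nonneg_right (by positivity)
  have hsplit : P / l = P / (l + q) * (1 + q / l) := by field_simp
  rw [hsplit, ← logPlus_of_one_le h1]
  exact logPlus_mul_le _ (zero_le_one.trans h1)

lemma log_one_add_le_log_two_add_logPlus {x : ℝ} (hx : 0 ≤ x) : log (1 + x) ≤ log 2 + logPlus x := by
  rw [logPlus, ← log_mul two_ne_zero (by positivity)]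
  exact log_le_log (by positivity) (by linarith [le_max_left 1 x, le_max_right 1 x])

lemma log_one_add_le_rpow_div {x r : ℝ} (hx : 0 ≤ x) (hr : 0 < r) (hr1 : r ≤ 1) :
    log (1 + x) ≤ x ^ r / r := by
  have h1x : 0 < 1 + x := by positivity
  rw [le_div_iff₀ hr, mul_comm, ← log_rpow h1x]
  calc log ((1 + x) ^ r) ≤ (1 + x) ^ r - 1 := log_le_sub_one_of_pos (rpow_pos_of_pos h1x r)
    _ ≤ x ^ r := by
      have := rpow_add_le_add_rpow zero_le_one hx hr.le hr1
      rw [one_rpow] at this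
      linarith

lemma log_one_add_pow_le_sqrt {K : ℕ} (hK : K ≠ 0) {x : ℝ} (hx : 0 ≤ x) :
    log (1 + x) ^ K ≤ (2 * K) ^ K * √x := by
  have hK' : (0 : ℝ) < 2 * K := by positivity
  have hlog : log (1 + x) ≤ 2 * K * x ^ (2 * K : ℝ)⁻¹ := by
    have := log_one_add_le_rpow_div hx (inv_pos.2 hK') (inv_le_one_of_one_le₀ (by
      have : (1 : ℝ) ≤ K := Nat.one_le_cast.2 (Nat.pos_of_ne_zero hK)
      linarith))
    rwa [div_inv_eq_mul, mul_comm] at this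
  calc log (1 + x) ^ K ≤ (2 * K * x ^ (2 * K : ℝ)⁻¹) ^ K :=
        pow_le_pow_left₀ (log_nonneg (by linarith)) hlog K
    _ = (2 * K) ^ K * √x := by
      rw [mul_pow, ← rpow_natCast (x ^ _), ← rpow_mul hx, sqrt_eq_rpow]
      congr 2
      field_simp

lemma hasDerivWithinAt_neg_logPlus_div_pow_succ_div {P x : ℝ} {K : ℕ} (hK : K ≠ 0) (hx : 0 < x) :
    HasDerivWithinAt (fun y => -(logPlus (P / y) ^ (K + 1) / (K + 1)))
      (logPlus (P / x) ^ K / x) (Ioi x) x := by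
  rcases lt_or_ge x P with hxP | hPx
  · have hderiv : HasDerivAt (fun y => -((log P - log y) ^ (K + 1) / (K + 1)))
        ((log P - log x) ^ K / x) x := by
      refine (((hasDerivAt_log hx.ne').const_sub (log P)).fun_pow (K + 1)).div_const
        ((K : ℝ) + 1) |>.fun_neg |>.congr_deriv ?_
      push_cast
      field_simp
    rw [logPlus_div_of_le hx hxP.le]
    refine (hderiv.congr_of_eventuallyEq ?_).hasDerivWithinAt
    filter_upwards [Ioo_mem_nhds hx hxP] with y hy
    rw [logPlus_div_of_le hy.1 hy.2.le]
  · have hzero : ∀ y, x ≤ y → logPlus (P / y) = 0 := fun y hy =>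
      logPlus_of_le_one ((div_le_one (hx.trans_le hy)).2 (hPx.trans hy))
    rw [hzero x le_rfl, zero_pow hK, zero_div]
    -- to the right of `x ≥ P` the function vanishes identically, so the kink at `P` is harmless
    refine (hasDerivWithinAt_const x _ 0).congr (fun y hy => ?_) ?_
    · simp [hzero y (le_of_lt hy), hK]
    · simp [hzero x le_rfl, hK]

lemma integral_logPlus_div_pow_div_le {P a b : ℝ} {K : ℕ} (hK : K ≠ 0) (ha : 0 < a) (hab : a ≤ b) :
    ∫ x in a..b, logPlus (P / x) ^ K / x ≤ logPlus (P / a) ^ (K + 1) / (K + 1) := by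
  have hsub : Icc a b ⊆ Ioi 0 := (Icc_subset_Ioi_iff hab).2 ha
  calc ∫ x in a..b, logPlus (P / x) ^ K / x
      ≤ -(logPlus (P / b) ^ (K + 1) / (K + 1)) - -(logPlus (P / a) ^ (K + 1) / (K + 1)) := by
        refine intervalIntegral.integral_le_sub_of_hasDeriv_right_of_le hab
          (by refine ContinuousOn.mono ?_ hsub; fun_prop (disch := intros; simp_all; positivity))
          (fun x hx => hasDerivWithinAt_neg_logPlus_div_pow_succ_div hK (ha.trans hx.1))
          (ContinuousOn.integrableOn_Icc
            (by refine ContinuousOn.mono ?_ hsub; fun_prop (disch := intros; simp_all; positivity)))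
          fun _ _ => le_rfl
    _ ≤ logPlus (P / a) ^ (K + 1) / (K + 1) := by
      have : 0 ≤ logPlus (P / b) ^ (K + 1) / (K + 1) := by
        have := logPlus_nonneg (P / b); positivity
      linarith

lemma hasDerivAt_two_mul_arctan_sqrt_div {q x : ℝ} (hq : 0 < q) (hx : 0 < x) :
    HasDerivAt (fun y => 2 * arctan √(y / q)) (1 / (√(x / q) * (x + q))) x := by
  have hxq : 0 < x / q := div_pos hx hq
  refine (((hasDerivAt_id x).div_const q).sqrt hxq.ne').arctan.const_mul 2 |>.congr_deriv ?_
  simp only [id]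
  rw [sq_sqrt hxq.le]
  field_simp
  ring

lemma integral_log_one_add_div_pow_div_le {q a b : ℝ} {K : ℕ} (hK : K ≠ 0) (hq : 0 ≤ q) (ha : 0 < a)
    (hab : a ≤ b) : ∫ x in a..b, log (1 + q / x) ^ K / (x + q) ≤ (2 * K) ^ K * π := by
  rcases hq.eq_or_lt with rfl | hq
  · simp only [add_zero, log_one, zero_pow hK, zero_div, intervalIntegral.integral_zero]
    positivity
  have hsub : Icc a b ⊆ Ioi 0 := (Icc_subset_Ioi_iff hab).2 ha
  calc ∫ x in a..b, log (1 + q / x) ^ K / (x + q)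
      ≤ (2 * K) ^ K * (2 * arctan √(b / q)) - (2 * K) ^ K * (2 * arctan √(a / q)) := by
        refine intervalIntegral.integral_le_sub_of_hasDeriv_right_of_le hab (by fun_prop)
          (fun x hx => ((hasDerivAt_two_mul_arctan_sqrt_div hq (ha.trans hx.1)).const_mul
            _).hasDerivWithinAt)
          (ContinuousOn.integrableOn_Icc
            (by refine ContinuousOn.mono ?_ hsub; fun_prop (disch := intros; simp_all; positivity))) ?_
        intro x hx
        have hx : 0 < x := ha.trans hx.1
        calc log (1 + q / x) ^ K / (x + q) ≤ (2 * K) ^ K * √(q / x) / (x + q) := by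
              gcongr; exact log_one_add_pow_le_sqrt hK (by positivity)
          _ = (2 * K) ^ K * (1 / (√(x / q) * (x + q))) := by
              rw [← inv_div x q, sqrt_inv]; field_simp
    _ ≤ (2 * K) ^ K * π := by
      rw [← mul_sub]
      gcongr
      linarith [arctan_lt_pi_div_two √(b / q), arctan_nonneg.2 (sqrt_nonneg (a / q))]

lemma integral_one_div_add_le {q a b : ℝ} (hq : 0 ≤ q) (ha : 0 < a) (hab : a ≤ b) :
    ∫ x in a..b, 1 / (x + q) ≤ log 2 + logPlus (b / (a + q)) := by
  have haq : 0 < a + q := by positivity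
  have hbq : 0 < b + q := by linarith
  rw [intervalIntegral.integral_comp_add_right (fun x => 1 / x), integral_one_div_of_pos haq hbq]
  calc log ((b + q) / (a + q)) ≤ log (1 + b / (a + q)) := by
        refine log_le_log (by positivity) ?_
        rw [div_le_iff₀ haq, add_mul, div_mul_cancel₀ _ haq.ne']
        linarith
    _ ≤ log 2 + logPlus (b / (a + q)) :=
        log_one_add_le_log_two_add_logPlus (div_nonneg (by linarith) haq.le)

lemma integral_logPlus_div_pow_div_add_le {P q a b : ℝ} {K : ℕ} (hK : K ≠ 0) (hq : 0 ≤ q)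
    (ha : 0 < a) (hab : a ≤ b) :
    ∫ l in a..b, logPlus (P / l) ^ K / (l + q) ≤
      2 ^ (K - 1) * (logPlus (P / (a + q)) ^ (K + 1) / (K + 1) + (2 * K) ^ K * π) := by
  have hsub : uIcc a b ⊆ Ioi 0 := by rw [uIcc_of_le hab]; exact (Icc_subset_Ioi_iff hab).2 ha
  have hint : ∀ f : ℝ → ℝ, ContinuousOn f (Ioi 0) → IntervalIntegrable f volume a b :=
    fun f hf => (hf.mono hsub).intervalIntegrable
  have hint₁ := hint (fun l => logPlus (P / (l + q)) ^ K / (l + q))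
    (by fun_prop (disch := intros; simp_all; positivity))
  have hint₂ := hint (fun l => log (1 + q / l) ^ K / (l + q))
    (by fun_prop (disch := intros; simp_all; positivity))
  have hpoint : ∀ l ∈ Icc a b, logPlus (P / l) ^ K / (l + q) ≤
      2 ^ (K - 1) * (logPlus (P / (l + q)) ^ K / (l + q) + log (1 + q / l) ^ K / (l + q)) := by
    intro l hl
    have hl : 0 < l := ha.trans_le hl.1
    rw [← add_div, ← mul_div_assoc]
    gcongr
    calc logPlus (P / l) ^ K ≤ (logPlus (P / (l + q)) + log (1 + q / l)) ^ K :=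
          pow_le_pow_left₀ (logPlus_nonneg _) (logPlus_div_le_add hl hq) K
      _ ≤ _ := add_pow_le (logPlus_nonneg _) (log_nonneg (le_add_of_nonneg_right (by positivity))) K
  calc ∫ l in a..b, logPlus (P / l) ^ K / (l + q)
      ≤ ∫ l in a..b, 2 ^ (K - 1) *
          (logPlus (P / (l + q)) ^ K / (l + q) + log (1 + q / l) ^ K / (l + q)) :=
        intervalIntegral.integral_mono_on hab
          (hint _ (by fun_prop (disch := intros; simp_all; positivity)))
          ((hint₁.add hint₂).const_mul _) hpoint
    _ = 2 ^ (K - 1) * ((∫ x in a + q..b + q, logPlus (P / x) ^ K / x) +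
          ∫ l in a..b, log (1 + q / l) ^ K / (l + q)) := by
        rw [intervalIntegral.integral_const_mul, intervalIntegral.integral_add hint₁ hint₂,
          intervalIntegral.integral_comp_add_right (fun x => logPlus (P / x) ^ K / x)]
    _ ≤ _ := by
        gcongr
        · exact integral_logPlus_div_pow_div_le hK (by positivity) (by linarith)
        · exact integral_log_one_add_div_pow_div_le hK hq ha hab

theorem stmt_8 (k : ℕ) :
    ∃ C : ℝ, 0 < C ∧ ∀ q P Λ Λ₀ : ℝ, 0 ≤ q → 0 < P → 0 < Λ → Λ ≤ Λ₀ →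
      (∫ l in Λ..Λ₀, (logPlus (P / l)) ^ k / (l + q)) <
        C * (1 + (logPlus (P / (Λ + q))) ^ (k + 1) + logPlus (Λ₀ / (Λ + q))) := by
  rcases Nat.eq_zero_or_pos k with rfl | hk
  · refine ⟨1, one_pos, fun q P Λ Λ₀ hq _ hΛ hΛΛ₀ => ?_⟩
    simp only [pow_zero, one_mul, zero_add, pow_one]
    have := logPlus_nonneg (P / (Λ + q))
    linarith [integral_one_div_add_le hq hΛ hΛΛ₀, log_two_lt_d9]
  set c : ℝ := (2 * k) ^ k * π
  have hc : 0 ≤ c := by positivity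
  refine ⟨2 ^ (k - 1) * (c + 1), by positivity, fun q P Λ Λ₀ hq _ hΛ hΛΛ₀ => ?_⟩
  set X := logPlus (P / (Λ + q)) ^ (k + 1)
  have hX : 0 ≤ X := pow_nonneg (logPlus_nonneg _) _
  have hXdiv : X / (k + 1) ≤ X := div_le_self hX (by linarith [(Nat.cast_nonneg k : (0 : ℝ) ≤ k)])
  have hB := logPlus_nonneg (Λ₀ / (Λ + q))
  calc ∫ l in Λ..Λ₀, logPlus (P / l) ^ k / (l + q) ≤ 2 ^ (k - 1) * (X / (k + 1) + c) :=
        integral_logPlus_div_pow_div_add_le hk.ne' hq hΛ hΛΛ₀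
    _ < 2 ^ (k - 1) * ((c + 1) * (1 + X + logPlus (Λ₀ / (Λ + q)))) := by
        gcongr
        nlinarith
    _ = _ := by ring
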